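/- Assume the cost c(x,y) = h(x−y) satisfies (H1)–(H3). Let u_1,…,u_n ∈ ℝ^d be distinct points in general position with n ≥ d, and let x_1,…,x_n ∈ ℝ^d be distinct, with Q_n the empirical measure of u_1,…,u_n. Then for every j ∈ {1,…,n}, the finite sample breakdown point of T_{Q_n→P_n}(u_j) is at most TD^−(u_j;Q_n) + 1/n. -/

import Mathlib

open Filter MeasureTheory Bornology Topology Set
open scoped RealInnerProductSpace ENNReal BigOperators Classical

noncomputable section

abbrev Euc (d : ℕ) := EuclideanSpace ℝ (Fin d)

/-- The cost function `c(x,y) = h(x-y)`. -/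
def cost {d : ℕ} (h : Euc d → ℝ) (x y : Euc d) : ℝ := h (x - y)

/-- The truncated cone `Cone(r, θ, z, p)`. -/
def TruncCone {d : ℕ} (r θ : ℝ) (z p : Euc d) : Set (Euc d) :=
  {x | ‖x - p‖ * ‖z‖ * Real.cos (θ / 2) ≤ ⟪z, x - p⟫ ∧ ⟪z, x - p⟫ ≤ r * ‖z‖}

/-- (H1): `h` is strictly convex. -/
def H1 {d : ℕ} (h : Euc d → ℝ) : Prop := StrictConvexOn ℝ Set.univ h

/-- (H2): for every height `r > 0` and angle `θ ∈ (0, π)` there is `M > 0` such that for every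
`p` with `‖p‖ > M` there is a truncated cone with vertex `p` on which `h` attains its maximum
at `p`. -/
def H2 {d : ℕ} (h : Euc d → ℝ) : Prop :=
  ∀ r : ℝ, 0 < r → ∀ θ : ℝ, θ ∈ Set.Ioo 0 Real.pi → ∃ M : ℝ, 0 < M ∧
    ∀ p : Euc d, M < ‖p‖ → ∃ z : Euc d, z ≠ 0 ∧ ∀ x ∈ TruncCone r θ z p, h x ≤ h p

/-- (H3): `h(x)/‖x‖ → ∞` as `‖x‖ → ∞`. -/
def H3 {d : ℕ} (h : Euc d → ℝ) : Prop :=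
  ∀ C : ℝ, ∃ R : ℝ, ∀ x : Euc d, R ≤ ‖x‖ → C * ‖x‖ ≤ h x

/-- A function `f : ℝ^d → ℝ ∪ {-∞}` is `c`-concave if it is an infimum of functions
`x ↦ c(x,y) - t` over a nonempty family `𝒯` of pairs `(y,t)`. -/
def IsCConcave {d : ℕ} (h : Euc d → ℝ) (f : Euc d → EReal) : Prop :=
  ∃ T : Set (Euc d × ℝ), T.Nonempty ∧
    ∀ x : Euc d, f x = ⨅ p ∈ T, ((cost h x p.1 - p.2 : ℝ) : EReal)

/-- The `c`-superdifferential of `f`, as a subset of `ℝ^d × ℝ^d`. -/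
def CSuperdiff {d : ℕ} (h : Euc d → ℝ) (f : Euc d → EReal) : Set (Euc d × Euc d) :=
  {q | ∀ z : Euc d, f z ≤ f q.1 + ((cost h z q.2 - cost h q.1 q.2 : ℝ) : EReal)}

/-- `∂^c f(x)`. -/
def CSuperdiffAt {d : ℕ} (h : Euc d → ℝ) (f : Euc d → EReal) (x : Euc d) : Set (Euc d) :=
  {y | (x, y) ∈ CSuperdiff h f}

/-- `∂^c f(U) = ⋃_{x ∈ U} ∂^c f(x)`. -/
def CSuperdiffImg {d : ℕ} (h : Euc d → ℝ) (f : Euc d → EReal) (U : Set (Euc d)) :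
    Set (Euc d) :=
  ⋃ x ∈ U, CSuperdiffAt h f x

/-- `dom(f) = {x : f(x) > -∞}`. -/
def edom {d : ℕ} (f : Euc d → EReal) : Set (Euc d) := {x | f x ≠ ⊥}

/-- A sequence of sets escapes to the horizon if it eventually avoids every ball
`B_R(0)`. -/
def EscapesToHorizon {α : Type*} [Norm α] (A : ℕ → Set α) : Prop :=
  ∀ R : ℝ, 0 < R → ∃ N : ℕ, ∀ n, N ≤ n → ∀ a ∈ A n, R ≤ ‖a‖

/-- No subsequence of the sequence of sets escapes to the horizon. -/
def NoSubseqEscapes {α : Type*} [Norm α] (A : ℕ → Set α) : Prop :=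
  ∀ φ : ℕ → ℕ, StrictMono φ → ¬ EscapesToHorizon fun k => A (φ k)

/-- A Kantorovich potential for `(Q, P')`: a `c`-concave function `f` whose `c`-superdifferential
is `Q`-a.e. a singleton `{T x}` and whose (a.e. defined) selection `T` pushes `Q` forward
to `P'`. -/
def IsKantorovichPotential {d : ℕ} (h : Euc d → ℝ) (Q P' : Measure (Euc d))
    (f : Euc d → EReal) : Prop :=
  IsCConcave h f ∧ ∃ T : Euc d → Euc d,
    (∀ᵐ x ∂Q, CSuperdiffAt h f x = {T x}) ∧ Measure.map T Q = P'

/-- The Tukey depth `TD(u;Q) = inf_{v ∈ S^{d-1}} Q {x : ⟨v, x-u⟩ ≤ 0}`. -/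
def tukeyDepth {d : ℕ} (Q : Measure (Euc d)) (u : Euc d) : ℝ≥0∞ :=
  ⨅ v ∈ {v : Euc d | ‖v‖ = 1}, Q {x | ⟪v, x - u⟫ ≤ 0}

/-- The set `S_ε(u)` of possible values at `u` of `c`-superdifferentials of Kantorovich
potentials from `Q` to an `ε`-contamination of `P`. -/
def contamSet {d : ℕ} (h : Euc d → ℝ) (Q P : Measure (Euc d)) (ε : ℝ) (u : Euc d) :
    Set (Euc d) :=
  {y | ∃ μ : Measure (Euc d), IsProbabilityMeasure μ ∧ ∃ f : Euc d → EReal,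
    IsKantorovichPotential h Q (ENNReal.ofReal (1 - ε) • P + ENNReal.ofReal ε • μ) f ∧
    y ∈ CSuperdiffAt h f u}

/-- Breakdown point `BP(u) = inf {ε ∈ (0,1) : S_ε(u) is unbounded}`. -/
def breakdownPoint {d : ℕ} (h : Euc d → ℝ) (Q P : Measure (Euc d)) (u : Euc d) : ℝ≥0∞ :=
  ⨅ ε ∈ {ε : ℝ | 0 < ε ∧ ε < 1 ∧ ¬ IsBounded (contamSet h Q P ε u)}, ENNReal.ofReal ε

/-- `σ` is an optimal assignment for source points `u` and target points `x`. -/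
def IsOptAssign {d n : ℕ} (h : Euc d → ℝ) (u x : Fin n → Euc d)
    (σ : Equiv.Perm (Fin n)) : Prop :=
  ∀ τ : Equiv.Perm (Fin n), ∑ i, cost h (u i) (x (σ i)) ≤ ∑ i, cost h (u i) (x (τ i))

/-- The dataset `x'` shares at least `k` atoms (with multiplicity) with the dataset `x`
of distinct points. -/
def SharesAtoms {d n : ℕ} (x x' : Fin n → Euc d) (k : ℕ) : Prop :=
  ∃ s : Finset (Fin n), k ≤ s.card ∧ ∃ g : Fin n → Fin n,
    Set.InjOn g ↑s ∧ ∀ i ∈ s, x' (g i) = x i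

/-- The set of values `x'_{σ(j)}` over datasets `x'` sharing at least `n - ℓ` atoms with `x`
and optimal assignments `σ` for `(u, x')`. -/
def fsBadSet {d n : ℕ} (h : Euc d → ℝ) (u x : Fin n → Euc d) (j : Fin n) (ℓ : ℕ) :
    Set (Euc d) :=
  {y | ∃ (x' : Fin n → Euc d) (σ : Equiv.Perm (Fin n)),
    SharesAtoms x x' (n - ℓ) ∧ IsOptAssign h u x' σ ∧ y = x' (σ j)}

/-- Finite sample (replacement) breakdown point of `T_{Q_n → P_n}(u_j)`. -/
def finiteSampleBP {d n : ℕ} (h : Euc d → ℝ) (u x : Fin n → Euc d) (j : Fin n) : ℝ :=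
  ((sInf {ℓ : ℕ | 1 ≤ ℓ ∧ ℓ ≤ n ∧ ¬ IsBounded (fsBadSet h u x j ℓ)} : ℕ) : ℝ) / n

/-- Tukey depth of `a` with respect to the empirical measure of `u_1, …, u_n`. -/
def empTD {d n : ℕ} (u : Fin n → Euc d) (a : Euc d) : ℝ :=
  ⨅ v : {v : Euc d // ‖v‖ = 1},
    ((Finset.univ.filter fun i => ⟪(v : Euc d), u i - a⟫ ≤ 0).card : ℝ) / n

/-- Lower Tukey depth of `a` with respect to the empirical measure of `u_1, …, u_n`. -/
def empTDlt {d n : ℕ} (u : Fin n → Euc d) (a : Euc d) : ℝ :=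
  ⨅ v : {v : Euc d // ‖v‖ = 1},
    ((Finset.univ.filter fun i => ⟪(v : Euc d), u i - a⟫ < 0).card : ℝ) / n

/-- Points in general position: every subset of cardinality at most `d+1` is affinely
independent. -/
def InGeneralPosition {d n : ℕ} (u : Fin n → Euc d) : Prop :=
  ∀ s : Finset (Fin n), s.card ≤ d + 1 → AffineIndependent ℝ fun i : s => u (i : Fin n)

/-- Convex conjugate `h*(y) = sup_x (⟨x,y⟩ - h(x))`. -/
def convConj {d : ℕ} (h : Euc d → ℝ) (y : Euc d) : ℝ := ⨆ x : Euc d, (⟪x, y⟫ - h x)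

/-- Topological support of a measure. -/
def measSupport {d : ℕ} (Q : Measure (Euc d)) : Set (Euc d) :=
  {x | ∀ U : Set (Euc d), IsOpen U → x ∈ U → 0 < Q U}

/-- A set `Γ ⊂ ℝ^d × ℝ^d` is `c`-cyclically monotone. -/
def CCyclMono {d : ℕ} (h : Euc d → ℝ) (Γ : Set (Euc d × Euc d)) : Prop :=
  ∀ (N : ℕ) (p : Fin N → Euc d × Euc d), (∀ i, p i ∈ Γ) →
    ∀ τ : Equiv.Perm (Fin N),
      ∑ i, cost h (p i).1 (p i).2 ≤ ∑ i, cost h (p i).1 (p (τ i)).2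

/-!
Fix a unit direction `v₀`. By general position at most `d` of the points `u i` lie on the
hyperplane through `u j` orthogonal to `v₀`, so these are affinely independent and `u j` can be
strictly separated from the others; tilting `v₀` slightly towards the separating direction gives
a direction `v` with no `u i` (`i ≠ j`) on the hyperplane and the same points strictly below it.
Let `k` be their number. Since `h` is continuous and superlinear, `m v` is a subgradient of `h`
at some point `p`, for every `m`. Replace `k + 1` points of `x` by `u j - p`. If an optimal
assignment did not send `u j` to a copy of `u j - p`, one copy would be matched with some `u i`
strictly above the hyperplane, and swapping `i` and `j` would save at least
`m ⟪v, u i - u j⟫` minus a bounded amount. Hence for large `m` the far point `u j - p` is a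
value of the contaminated map, and `‖p‖ → ∞` as `m → ∞`; so `k + 1` replacements already break
`T(u j)`, while `k / n` is the mass of the open half-space below `u j` in direction `v₀`.
-/

section Geometry

variable {E : Type*} [NormedAddCommGroup E] [InnerProductSpace ℝ E]

theorem AffineIndependent.card_le_finrank_of_inner_sub_eq_zero [FiniteDimensional ℝ E]
    {ι : Type*} [Fintype ι] {p : ι → E} (hp : AffineIndependent ℝ p) {v b : E} (hv : v ≠ 0)
    (hpv : ∀ i, ⟪v, p i - b⟫ = 0) : Fintype.card ι ≤ Module.finrank ℝ E := by
  have hspan : vectorSpan ℝ (Set.range p) ≤ (ℝ ∙ v)ᗮ := by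
    rw [vectorSpan_def, Submodule.span_le, Set.vsub_subset_iff]
    rintro _ ⟨i, rfl⟩ _ ⟨k, rfl⟩
    rw [SetLike.mem_coe, Submodule.mem_orthogonal_singleton_iff_inner_right, vsub_eq_sub,
      ← sub_sub_sub_cancel_right (p i) (p k) b, inner_sub_right, hpv, hpv, sub_zero]
  have hdim := (ℝ ∙ v).finrank_add_finrank_orthogonal
  rw [finrank_span_singleton hv] at hdim
  have := hp.card_le_finrank_succ.trans (Nat.add_le_add_right (Submodule.finrank_mono hspan) 1)
  omega

theorem exists_unit_inner_ne_zero_of_inner_eq_zero_imp {ι : Type*} [Finite ι] (a : ι → E)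
    {v₀ w : E} (hv₀ : v₀ ≠ 0) (hw : ∀ i, ⟪v₀, a i⟫ = 0 → 0 < ⟪w, a i⟫) :
    ∃ v : E, ‖v‖ = 1 ∧ ∀ i, ⟪v, a i⟫ ≠ 0 ∧ (⟪v, a i⟫ < 0 ↔ ⟪v₀, a i⟫ < 0) := by
  have hline : Tendsto (fun ε : ℝ => v₀ + ε • w) (𝓝[>] 0) (𝓝 v₀) := by
    refine (Continuous.tendsto' ?_ 0 v₀ (by simp)).mono_left nhdsWithin_le_nhds
    fun_prop
  have hsign : ∀ i, ∀ᶠ ε in 𝓝[>] (0 : ℝ),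
      ⟪v₀ + ε • w, a i⟫ ≠ 0 ∧ (⟪v₀ + ε • w, a i⟫ < 0 ↔ ⟪v₀, a i⟫ < 0) := by
    intro i
    have hi := hline.inner (𝕜 := ℝ) (tendsto_const_nhds (x := a i))
    rcases lt_trichotomy ⟪v₀, a i⟫ 0 with hneg | hzero | hpos
    · filter_upwards [hi.eventually_lt_const hneg] with ε hε using ⟨hε.ne, iff_of_true hε hneg⟩
    · filter_upwards [self_mem_nhdsWithin] with ε (hε : 0 < ε)
      have hεi : 0 < ⟪v₀ + ε • w, a i⟫ := by
        rw [inner_add_left, hzero, zero_add, real_inner_smul_left]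
        exact mul_pos hε (hw i hzero)
      exact ⟨hεi.ne', iff_of_false hεi.not_gt hzero.not_lt⟩
    · filter_upwards [hi.eventually_const_lt hpos] with ε hε
      exact ⟨hε.ne', iff_of_false hε.not_gt hpos.not_gt⟩
  obtain ⟨ε, hne, hε⟩ := ((hline.eventually_ne hv₀).and (eventually_all.2 hsign)).exists
  refine ⟨‖v₀ + ε • w‖⁻¹ • (v₀ + ε • w), norm_smul_inv_norm hne, fun i => ?_⟩
  have hc : 0 < ‖v₀ + ε • w‖⁻¹ := inv_pos.2 (norm_pos_iff.2 hne)
  rw [real_inner_smul_left, ← (hε i).2]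
  exact ⟨mul_ne_zero hc.ne' (hε i).1, ⟨(neg_of_mul_neg_right · hc.le), mul_neg_of_pos_of_neg hc⟩⟩

end Geometry

section GeneralPosition

variable {d n : ℕ} {u : Fin n → Euc d}

theorem InGeneralPosition.card_filter_inner_sub_eq_zero_le (hgp : InGeneralPosition u)
    {v : Euc d} (hv : v ≠ 0) (b : Euc d) :
    (Finset.univ.filter fun i => ⟪v, u i - b⟫ = 0).card ≤ d := by
  by_contra! hlt
  obtain ⟨t, hts, htc⟩ := Finset.exists_subset_card_eq (Nat.succ_le_of_lt hlt)
  have := (hgp t htc.le).card_le_finrank_of_inner_sub_eq_zero hv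
    fun i => (Finset.mem_filter.1 (hts i.2)).2
  rw [Fintype.card_coe, htc, finrank_euclideanSpace_fin] at this
  omega

theorem InGeneralPosition.exists_inner_pos_of_inner_eq_zero (hgp : InGeneralPosition u)
    (j : Fin n) {v : Euc d} (hv : v ≠ 0) :
    ∃ w : Euc d, ∀ i ≠ j, ⟪v, u i - u j⟫ = 0 → 0 < ⟪w, u i - u j⟫ := by
  set T := Finset.univ.filter fun i => ⟪v, u i - u j⟫ = 0
  have hjT : j ∈ T := by simp [T]
  have hT := hgp T ((hgp.card_filter_inner_sub_eq_zero_le hv (u j)).trans d.le_succ)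
  set K := convexHull ℝ ((fun i : T => u i) '' (Set.univ \ {⟨j, hjT⟩}))
  have hjK : u j ∉ K := fun hmem =>
    hT.notMem_affineSpan_sdiff ⟨j, hjT⟩ Set.univ (convexHull_subset_affineSpan _ hmem)
  obtain ⟨f, s, hfj, hfK⟩ := geometric_hahn_banach_point_closed (convex_convexHull ℝ _)
    ((Set.toFinite _).isClosed_convexHull (𝕜 := ℝ)) hjK
  refine ⟨(InnerProductSpace.toDual ℝ (Euc d)).symm f, fun i hij hi => ?_⟩
  have hiK : u i ∈ K := subset_convexHull ℝ _ ⟨⟨i, by simp [T, hi]⟩, by simp [hij], rfl⟩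
  rw [InnerProductSpace.toDual_symm_apply, map_sub]
  linarith [hfK _ hiK]

theorem InGeneralPosition.exists_unit_inner_ne_zero (hgp : InGeneralPosition u) (j : Fin n)
    {v₀ : Euc d} (hv₀ : v₀ ≠ 0) :
    ∃ v : Euc d, ‖v‖ = 1 ∧ (∀ i ≠ j, ⟪v, u i - u j⟫ ≠ 0) ∧
      Finset.univ.filter (fun i => ⟪v, u i - u j⟫ < 0) =
        Finset.univ.filter (fun i => ⟪v₀, u i - u j⟫ < 0) := by
  obtain ⟨w, hw⟩ := hgp.exists_inner_pos_of_inner_eq_zero j hv₀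
  obtain ⟨v, hv, hvw⟩ := exists_unit_inner_ne_zero_of_inner_eq_zero_imp
    (fun i : {i // i ≠ j} => u i - u j) hv₀ fun i => hw i i.2
  refine ⟨v, hv, fun i hi => (hvw ⟨i, hi⟩).1, ?_⟩
  ext i
  by_cases hi : i = j
  · simp [hi]
  · simpa using (hvw ⟨i, hi⟩).2

end GeneralPosition

section Coercive

variable {d : ℕ} {h : Euc d → ℝ}

theorem exists_forall_add_inner_le (hcont : Continuous h) (h3 : H3 h) (a : Euc d) :
    ∃ p, ∀ z, h p + ⟪a, z⟫ ≤ h (p + z) := by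
  obtain ⟨R, hR⟩ := h3 (‖a‖ + 1)
  have hcoercive : Tendsto (fun q => h q - ⟪a, q⟫) (cocompact (Euc d)) atTop := by
    refine tendsto_atTop_mono' _ ?_ tendsto_norm_cocompact_atTop
    filter_upwards [tendsto_norm_cocompact_atTop.eventually_ge_atTop R] with q hq
    nlinarith [hR q hq, real_inner_le_norm a q]
  obtain ⟨p, hp⟩ := Continuous.exists_forall_le (by fun_prop) hcoercive
  refine ⟨p, fun z => ?_⟩
  have := hp (p + z)
  rw [inner_add_right] at this
  linarith

theorem sub_one_le_inner_of_forall_add_inner_le (hpos : ∀ x, 0 ≤ h x) {v p : Euc d}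
    (hv : ‖v‖ = 1) {m t : ℝ} (hm : 0 < m) (hmt : h (t • v) ≤ m)
    (hp : ∀ z, h p + m * ⟪v, z⟫ ≤ h (p + z)) : t - 1 ≤ ⟪v, p⟫ := by
  have := hp (t • v - p)
  rw [add_sub_cancel, inner_sub_right, real_inner_smul_right, real_inner_self_eq_norm_sq, hv]
    at this
  nlinarith [hpos p]

end Coercive

section Assignment

variable {d n : ℕ} {h : Euc d → ℝ} {u x : Fin n → Euc d}

theorem IsOptAssign.cost_add_le_swap {σ : Equiv.Perm (Fin n)} (hσ : IsOptAssign h u x σ)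
    (i j : Fin n) :
    cost h (u i) (x (σ i)) + cost h (u j) (x (σ j)) ≤
      cost h (u i) (x (σ j)) + cost h (u j) (x (σ i)) := by
  rcases eq_or_ne i j with rfl | hij
  · rfl
  have hswap := sub_nonneg.2 (hσ (σ * Equiv.swap i j))
  rw [← Finset.sum_sub_distrib, Fintype.sum_eq_add i j hij fun k hk => by
    simp [Equiv.swap_apply_of_ne_of_ne hk.1 hk.2]] at hswap
  simp only [Equiv.Perm.mul_apply, Equiv.swap_apply_left, Equiv.swap_apply_right] at hswap
  linarith

theorem sharesAtoms_ite (S : Finset (Fin n)) (y : Euc d) :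
    SharesAtoms x (fun b => if b ∈ S then y else x b) (n - S.card) :=
  ⟨Sᶜ, by simp [Finset.card_compl], id, Set.injOn_id _,
    fun _ hi => if_neg (Finset.mem_compl.1 hi)⟩

theorem card_filter_inner_sub_lt (v : Euc d) (j : Fin n) :
    (Finset.univ.filter fun i => ⟪v, u i - u j⟫ < 0).card < n := by
  simpa using Finset.card_lt_univ_of_notMem (x := j) (by simp)

theorem IsOptAssign.apply_mem_of_forall_add_inner_le {σ : Equiv.Perm (Fin n)}
    (hσ : IsOptAssign h u x σ) {j : Fin n} {v p : Euc d} {m : ℝ} {S : Finset (Fin n)}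
    (hties : ∀ i ≠ j, ⟪v, u i - u j⟫ ≠ 0)
    (hS : (Finset.univ.filter fun i => ⟪v, u i - u j⟫ < 0).card < S.card)
    (hp : ∀ z, h p + m * ⟪v, z⟫ ≤ h (p + z)) (hxS : ∀ b ∈ S, x b = u j - p)
    (hm : ∀ i, 0 < ⟪v, u i - u j⟫ → ∀ b ∉ S,
      cost h (u i) (x b) - cost h (u j) (x b) < m * ⟪v, u i - u j⟫) :
    σ j ∈ S := by
  by_contra hjS
  obtain ⟨i, hiS, hi⟩ := Finset.exists_mem_notMem_of_card_lt_card
    (hS.trans_eq (Finset.card_map σ.symm.toEmbedding).symm)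
  rw [Finset.mem_map_equiv, Equiv.symm_symm] at hiS
  have hij : i ≠ j := by rintro rfl; exact hjS hiS
  have hvi : 0 < ⟪v, u i - u j⟫ :=
    (not_lt.1 fun hneg => hi (by simpa using hneg)).lt_of_ne' (hties i hij)
  have hswap := hσ.cost_add_le_swap i j
  have hfar : h p + m * ⟪v, u i - u j⟫ ≤ cost h (u i) (u j - p) := by
    rw [cost, show u i - (u j - p) = p + (u i - u j) by abel]
    exact hp _
  have hnear : cost h (u j) (u j - p) = h p := by rw [cost, sub_sub_cancel]
  rw [hxS _ hiS, hnear] at hswap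
  linarith [hm i hvi _ hjS]

end Assignment

section Breakdown

variable {d n : ℕ} {h : Euc d → ℝ}

theorem finiteSampleBP_le_of_not_isBounded {u x : Fin n → Euc d} {j : Fin n} {ℓ : ℕ}
    (hℓ : 1 ≤ ℓ) (hℓn : ℓ ≤ n) (hunb : ¬ IsBounded (fsBadSet h u x j ℓ)) :
    finiteSampleBP h u x j ≤ ℓ / n := by
  unfold finiteSampleBP
  gcongr
  exact Nat.sInf_le ⟨hℓ, hℓn, hunb⟩

theorem not_isBounded_fsBadSet (hpos : ∀ x, 0 ≤ h x) (hcont : Continuous h) (h3 : H3 h)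
    (u x : Fin n → Euc d) (j : Fin n) {v : Euc d} (hv : ‖v‖ = 1)
    (hties : ∀ i ≠ j, ⟪v, u i - u j⟫ ≠ 0) :
    ¬ IsBounded (fsBadSet h u x j
      ((Finset.univ.filter fun i => ⟪v, u i - u j⟫ < 0).card + 1)) := by
  set k := (Finset.univ.filter fun i => ⟪v, u i - u j⟫ < 0).card
  obtain ⟨S, -, hS⟩ := Finset.exists_subset_card_eq (s := (Finset.univ : Finset (Fin n)))
    (n := k + 1) (by rw [Finset.card_univ, Fintype.card_fin]; exact card_filter_inner_sub_lt v j)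
  obtain ⟨B, hB⟩ := Finite.bddAbove_range fun ib : Fin n × Fin n =>
    cost h (u ib.1) (x ib.2) - cost h (u j) (x ib.2)
  rw [isBounded_iff_forall_norm_le]
  rintro ⟨C, hC⟩
  set t := C + ‖u j‖ + 2
  obtain ⟨m, hm, hmt, hmB⟩ : ∃ m : ℝ, 0 < m ∧ h (t • v) ≤ m ∧
      ∀ i, 0 < ⟪v, u i - u j⟫ → B < m * ⟪v, u i - u j⟫ := by
    refine ((eventually_gt_atTop 0).and ((eventually_ge_atTop _).and
      (eventually_all.2 fun i => ?_))).exists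
    by_cases hi : 0 < ⟪v, u i - u j⟫
    · exact ((tendsto_id.atTop_mul_const hi).eventually_gt_atTop B).mono fun m hm _ => hm
    · exact Eventually.of_forall fun m hi' => absurd hi' hi
  obtain ⟨p, hp⟩ := exists_forall_add_inner_le hcont h3 (m • v)
  simp only [real_inner_smul_left] at hp
  set y := u j - p
  set x' := fun b => if b ∈ S then y else x b
  obtain ⟨σ, hσ⟩ : ∃ σ, IsOptAssign h u x' σ := Finite.exists_min _
  have hjS : σ j ∈ S := hσ.apply_mem_of_forall_add_inner_le hties (by omega) hp
    (fun b hb => if_pos hb) fun i hi b hb => by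
      simp only [x', if_neg hb]
      linarith [hB ⟨(i, b), rfl⟩, hmB i hi]
  have hy := hC y ⟨x', σ, hS ▸ sharesAtoms_ite S y, hσ, (if_pos hjS).symm⟩
  have hvp := sub_one_le_inner_of_forall_add_inner_le hpos hv hm hmt hp
  have hpy : ‖p‖ - ‖u j‖ ≤ ‖y‖ := by
    rw [norm_sub_rev]; exact norm_sub_norm_le p (u j)
  have hvp' : ⟪v, p⟫ ≤ ‖p‖ := by simpa [hv] using real_inner_le_norm v p
  linarith

end Breakdown

theorem finiteSampleBP_le_of_generalPosition_general (d n : ℕ) (hd : 1 ≤ d) (h : Euc d → ℝ)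
    (hpos : ∀ x, 0 ≤ h x) (h1 : H1 h) (h3 : H3 h) (u x : Fin n → Euc d)
    (hgp : InGeneralPosition u) (j : Fin n) :
    finiteSampleBP h u x j ≤ empTDlt u (u j) + 1 / n := by
  have hcont : Continuous h := continuousOn_univ.1 (h1.convexOn.continuousOn isOpen_univ)
  have : Nonempty {v : Euc d // ‖v‖ = 1} :=
    ⟨⟨EuclideanSpace.single ⟨0, hd⟩ 1, by simp⟩⟩
  rw [← sub_le_iff_le_add]
  refine le_ciInf fun v₀ => ?_
  obtain ⟨v, hv, hties, hbelow⟩ :=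
    hgp.exists_unit_inner_ne_zero j (norm_ne_zero_iff.1 (v₀.2.symm ▸ one_ne_zero))
  have hBP := finiteSampleBP_le_of_not_isBounded le_add_self (card_filter_inner_sub_lt v j)
    (not_isBounded_fsBadSet hpos hcont h3 u x j hv hties)
  rw [hbelow, Nat.cast_add_one, add_div] at hBP
  linarith

/-- under general position and `n ≥ d`, the finite sample breakdown point of
`T_{Q_n→P_n}(u_j)` is at most `TD^-(u_j;Q_n) + 1/n`. -/
theorem finiteSampleBP_le_of_generalPosition (d n : ℕ) (hd : 1 ≤ d) (h : Euc d → ℝ)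
    (hpos : ∀ x, 0 ≤ h x) (h1 : H1 h) (h2 : H2 h) (h3 : H3 h)
    (u x : Fin n → Euc d) (hu : Function.Injective u) (hx : Function.Injective x)
    (hgp : InGeneralPosition u) (hn : d ≤ n) (j : Fin n) :
    finiteSampleBP h u x j ≤ empTDlt u (u j) + 1 / n :=
  finiteSampleBP_le_of_generalPosition_general d n hd h hpos h1 h3 u x hgp j

end
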